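/- Let 4/5 < α < 1 and integers n ≥ 2k+2, k ≥ 1. Then μ_α(K(n,k,1)) < n, and for every m with 2 ≤ m ≤ n-k-1, μ_α(K(n,k,m)) > n. Consequently μ_α(K(n,k,m)) > μ_α(K(n,k,1)) for all 2 ≤ m ≤ n-k-1. -/

import Mathlib

open Matrix BigOperators

/-- Spectral radius of a real square matrix: the largest modulus of its complex eigenvalues. -/
noncomputable def specRad {n : ℕ} (M : Matrix (Fin n) (Fin n) ℝ) : ℝ :=
  sSup {r : ℝ | ∃ μ ∈ spectrum ℂ (M.map (fun x => (x : ℂ))), r = ‖μ‖}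

/-- A matrix is irreducible iff its associated digraph is strongly connected. -/
def Irred {n : ℕ} (M : Matrix (Fin n) (Fin n) ℝ) : Prop :=
  ∀ i j : Fin n, Relation.ReflTransGen (fun a b => M a b ≠ 0) i j

/-- A directed walk of length `k` from `i` to `j` in a digraph. -/
def DWalk {n : ℕ} (G : Digraph (Fin n)) (i j : Fin n) (k : ℕ) : Prop :=
  ∃ f : ℕ → Fin n, f 0 = i ∧ f k = j ∧ ∀ l < k, G.Adj (f l) (f (l + 1))

/-- A digraph is strongly connected iff every vertex can reach every vertex. -/
def SConn {n : ℕ} (G : Digraph (Fin n)) : Prop :=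
  ∀ i j : Fin n, ∃ k : ℕ, DWalk G i j k

/-- A simple digraph has no loops. -/
def Loopless {n : ℕ} (G : Digraph (Fin n)) : Prop := ∀ i : Fin n, ¬ G.Adj i i

/-- Directed distance from `i` to `j`. -/
noncomputable def ddist {n : ℕ} (G : Digraph (Fin n)) (i j : Fin n) : ℕ :=
  sInf {k : ℕ | DWalk G i j k}

/-- Transmission of vertex `i`: sum of distances from `i` to all vertices. -/
noncomputable def transm {n : ℕ} (G : Digraph (Fin n)) (i : Fin n) : ℝ :=
  ∑ j : Fin n, (ddist G i j : ℝ)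

/-- The generalized distance matrix `D_α(G) = α·Diag(Tr) + (1-α)·D(G)`. -/
noncomputable def Dalpha {n : ℕ} (α : ℝ) (G : Digraph (Fin n)) : Matrix (Fin n) (Fin n) ℝ :=
  α • Matrix.diagonal (transm G) + (1 - α) • (Matrix.of fun i j => (ddist G i j : ℝ))

/-- The `D_α` spectral radius of a digraph. -/
noncomputable def mualpha {n : ℕ} (α : ℝ) (G : Digraph (Fin n)) : ℝ :=
  specRad (Dalpha α G)

/-- Isomorphism of digraphs on `Fin n`. -/
def IsoD {n : ℕ} (G H : Digraph (Fin n)) : Prop :=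
  ∃ e : Fin n ≃ Fin n, ∀ i j : Fin n, G.Adj i j ↔ H.Adj (e i) (e j)

/-- The digraph `K(n,k,m)`: vertices `0..k-1` form `K↔ₖ`, `k..k+m-1` form `K↔ₘ`,
`k+m..n-1` form `K↔_{n-k-m}`; all arcs present except those from `K↔_{n-k-m}` to `K↔ₘ`. -/
def KD (n k m : ℕ) : Digraph (Fin n) :=
  ⟨fun i j => i ≠ j ∧ ¬(k + m ≤ (i : ℕ) ∧ k ≤ (j : ℕ) ∧ (j : ℕ) < k + m)⟩

/-- A directed walk staying inside a vertex set `A`. -/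
def DWalkIn {n : ℕ} (G : Digraph (Fin n)) (A : Set (Fin n)) (i j : Fin n) (k : ℕ) : Prop :=
  ∃ f : ℕ → Fin n, f 0 = i ∧ f k = j ∧ (∀ l ≤ k, f l ∈ A) ∧ ∀ l < k, G.Adj (f l) (f (l + 1))

/-- The induced subdigraph on `A` is strongly connected. -/
def SCOn {n : ℕ} (G : Digraph (Fin n)) (A : Set (Fin n)) : Prop :=
  ∀ i ∈ A, ∀ j ∈ A, ∃ k : ℕ, DWalkIn G A i j k

/-!
The three cliques of `K(n,k,m)` form an equitable partition of `D_α`: the distance between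
distinct vertices is `2` from the last clique to the middle one and `1` otherwise. Hence `D_α`
maps vectors constant on the cliques to such vectors, through a `3 × 3` quotient matrix `Q`, and
`det (x I - Q) = (x - αn + 1) q(x)` with `q` the quadratic of the statement.

For `m ≥ 2` the hypotheses give `q(n) < 0`, so `q` has a root above `n`; it lifts to an
eigenvalue of `D_α`, which is therefore at most `μ_α`. For `m = 1` the positive vector equal to
`1` on the first two cliques and `1 + 1/n` on the last satisfies `D_α x < n x` componentwise, and
for a nonnegative matrix this bounds every eigenvalue in modulus strictly below `n`
(compare `|v|` with `x` where `|v_i| / x_i` is maximal).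
-/

theorem mem_spectrum_iff_exists_mulVec_eq_smul {N : ℕ} {A : Matrix (Fin N) (Fin N) ℂ} {μ : ℂ} :
    μ ∈ spectrum ℂ A ↔ ∃ v : Fin N → ℂ, v ≠ 0 ∧ A *ᵥ v = μ • v := by
  rw [spectrum.mem_iff, Algebra.algebraMap_eq_smul_one, Matrix.isUnit_iff_isUnit_det,
    isUnit_iff_ne_zero, not_ne_iff, ← Matrix.exists_mulVec_eq_zero_iff]
  simp only [Matrix.sub_mulVec, Matrix.smul_mulVec, Matrix.one_mulVec, sub_eq_zero, eq_comm]

theorem norm_le_of_mem_spectrum_of_mulVec_le {N : ℕ} {A : Matrix (Fin N) (Fin N) ℝ}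
    (hA : ∀ i j, 0 ≤ A i j) {x : Fin N → ℝ} (hx : ∀ i, 0 < x i) {c : ℝ}
    (hAx : ∀ i, (A *ᵥ x) i ≤ c * x i) {μ : ℂ}
    (hμ : μ ∈ spectrum ℂ (A.map (fun t => (t : ℂ)))) : ‖μ‖ ≤ c := by
  obtain ⟨v, hv, hAv⟩ := mem_spectrum_iff_exists_mulVec_eq_smul.mp hμ
  obtain ⟨j, hj⟩ := Function.ne_iff.mp hv
  obtain ⟨i, -, hmax⟩ := Finset.exists_max_image Finset.univ (fun i => ‖v i‖ / x i)
    ⟨j, Finset.mem_univ j⟩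
  set s := ‖v i‖ / x i
  have hvx : ∀ j, ‖v j‖ ≤ s * x j := fun j =>
    (div_le_iff₀ (hx j)).mp (hmax j (Finset.mem_univ j))
  have hs : 0 < s := (div_pos (norm_pos_iff.mpr hj) (hx j)).trans_le (hmax j (Finset.mem_univ j))
  have hvi : ‖v i‖ = s * x i := (div_mul_cancel₀ _ (hx i).ne').symm
  have hrow : ∑ j, (A i j : ℂ) * v j = μ * v i := by
    simpa [Matrix.mulVec, dotProduct] using congrFun hAv i
  refine le_of_mul_le_mul_right ?_ (mul_pos hs (hx i))
  calc ‖μ‖ * (s * x i) = ‖∑ j, (A i j : ℂ) * v j‖ := by rw [hrow, norm_mul, hvi]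
    _ ≤ ∑ j, A i j * ‖v j‖ := by
      refine (norm_sum_le _ _).trans_eq (Finset.sum_congr rfl fun j _ => ?_)
      rw [norm_mul, Complex.norm_real, Real.norm_of_nonneg (hA i j)]
    _ ≤ ∑ j, A i j * (s * x j) := by gcongr with j; exact hA i j; exact hvx j
    _ = s * (A *ᵥ x) i := by simp only [Matrix.mulVec, dotProduct, Finset.mul_sum, mul_left_comm]
    _ ≤ s * (c * x i) := by gcongr; exact hAx i
    _ = c * (s * x i) := by ring

theorem specRad_lt_of_mulVec_lt {N : ℕ} [NeZero N] {A : Matrix (Fin N) (Fin N) ℝ}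
    (hA : ∀ i j, 0 ≤ A i j) {x : Fin N → ℝ} (hx : ∀ i, 0 < x i) {c : ℝ}
    (hAx : ∀ i, (A *ᵥ x) i < c * x i) : specRad A < c := by
  obtain ⟨i, -, hmax⟩ := Finset.exists_max_image Finset.univ (fun i => (A *ᵥ x) i / x i)
    Finset.univ_nonempty
  have hle : ∀ j, (A *ᵥ x) j ≤ (A *ᵥ x) i / x i * x j := fun j =>
    (div_le_iff₀ (hx j)).mp (hmax j (Finset.mem_univ j))
  have hnonneg : 0 ≤ (A *ᵥ x) i / x i :=
    div_nonneg (Finset.sum_nonneg fun j _ => mul_nonneg (hA i j) (hx j).le :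
      0 ≤ ∑ j, A i j * x j) (hx i).le
  refine (Real.sSup_le ?_ hnonneg).trans_lt ((div_lt_iff₀ (hx i)).mpr (hAx i))
  rintro r ⟨μ, hμ, rfl⟩
  exact norm_le_of_mem_spectrum_of_mulVec_le hA hx hle hμ

theorem abs_le_specRad_of_mulVec_eq {N : ℕ} {A : Matrix (Fin N) (Fin N) ℝ} {v : Fin N → ℝ}
    (hv : v ≠ 0) {r : ℝ} (hAv : A *ᵥ v = r • v) : |r| ≤ specRad A := by
  have hr : (r : ℂ) ∈ spectrum ℂ (A.map (fun t => (t : ℂ))) := by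
    refine mem_spectrum_iff_exists_mulVec_eq_smul.mpr ⟨fun j => v j, ?_, ?_⟩
    · obtain ⟨j, hj⟩ := Function.ne_iff.mp hv
      exact Function.ne_iff.mpr ⟨j, by simpa using hj⟩
    · ext i
      have := congrArg (fun t : ℝ => (t : ℂ)) (congrFun hAv i)
      simpa [Matrix.mulVec, dotProduct] using this
  have hbdd := ((Matrix.finite_spectrum (A.map (fun t => (t : ℂ)))).image (‖·‖)).bddAbove
  refine le_csSup (by simpa only [Set.image, eq_comm] using hbdd) ⟨r, hr, ?_⟩
  rw [Complex.norm_real, Real.norm_eq_abs]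

theorem exists_gt_quadratic_eq_zero {b c x₀ : ℝ} (h : x₀ ^ 2 - b * x₀ + c < 0) :
    ∃ r, x₀ < r ∧ r ^ 2 - b * r + c = 0 := by
  have hdisc : (2 * x₀ - b) ^ 2 < b ^ 2 - 4 * c := by nlinarith
  have hsqrt : |2 * x₀ - b| < √(b ^ 2 - 4 * c) := by
    simpa [Real.sqrt_sq_eq_abs] using Real.sqrt_lt_sqrt (sq_nonneg _) hdisc
  refine ⟨(b + √(b ^ 2 - 4 * c)) / 2, by linarith [le_abs_self (2 * x₀ - b)], ?_⟩
  nlinarith [Real.sq_sqrt ((sq_nonneg _).trans hdisc.le)]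

section Distance

variable {n : ℕ} {G : Digraph (Fin n)} {i j : Fin n}

theorem dWalk_zero_iff : DWalk G i j 0 ↔ i = j :=
  ⟨fun ⟨f, h0, h1, _⟩ => h0 ▸ h1, fun h => ⟨fun _ => j, h ▸ rfl, rfl, by simp⟩⟩

theorem dWalk_one_iff : DWalk G i j 1 ↔ G.Adj i j := by
  refine ⟨fun ⟨f, h0, h1, hf⟩ => h0 ▸ h1 ▸ hf 0 one_pos, fun h => ?_⟩
  exact ⟨fun l => if l = 0 then i else j, rfl, rfl, fun l hl => by simpa [Nat.lt_one_iff.mp hl]⟩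

theorem dWalk_two {z : Fin n} (hiz : G.Adj i z) (hzj : G.Adj z j) : DWalk G i j 2 := by
  refine ⟨fun l => if l = 0 then i else if l = 1 then z else j, rfl, rfl, fun l hl => ?_⟩
  interval_cases l <;> simpa

theorem ddist_le {d : ℕ} (h : DWalk G i j d) : ddist G i j ≤ d := Nat.sInf_le h

theorem dWalk_ddist {d : ℕ} (h : DWalk G i j d) : DWalk G i j (ddist G i j) :=
  Nat.sInf_mem (s := {d | DWalk G i j d}) ⟨d, h⟩

theorem ddist_self (G : Digraph (Fin n)) (i : Fin n) : ddist G i i = 0 :=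
  Nat.le_zero.mp (ddist_le (dWalk_zero_iff.mpr rfl))

theorem ddist_pos {d : ℕ} (hij : i ≠ j) (h : DWalk G i j d) : 0 < ddist G i j :=
  Nat.pos_of_ne_zero fun h0 => hij (dWalk_zero_iff.mp (h0 ▸ dWalk_ddist h))

theorem ddist_of_adj (hij : i ≠ j) (h : G.Adj i j) : ddist G i j = 1 :=
  le_antisymm (ddist_le (dWalk_one_iff.mpr h)) (ddist_pos hij (dWalk_one_iff.mpr h))

theorem ddist_of_not_adj {z : Fin n} (hij : i ≠ j) (h : ¬ G.Adj i j) (hiz : G.Adj i z)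
    (hzj : G.Adj z j) : ddist G i j = 2 := by
  have hw := dWalk_two hiz hzj
  have hne : ddist G i j ≠ 1 := fun h1 => h (dWalk_one_iff.mp (h1 ▸ dWalk_ddist hw))
  have := ddist_le hw
  have := ddist_pos hij hw
  omega

end Distance

theorem Dalpha_mulVec_apply {n : ℕ} (α : ℝ) (G : Digraph (Fin n)) (v : Fin n → ℝ) (i : Fin n) :
    (Dalpha α G *ᵥ v) i = α * (transm G i * v i) + (1 - α) * ∑ j, (ddist G i j : ℝ) * v j := by
  rw [Dalpha, Matrix.add_mulVec, Matrix.smul_mulVec, Matrix.smul_mulVec]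
  simp only [Pi.add_apply, Pi.smul_apply, smul_eq_mul, Matrix.mulVec_diagonal]
  rfl

theorem Dalpha_nonneg {n : ℕ} {α : ℝ} (hα₀ : 0 ≤ α) (hα₁ : α ≤ 1) (G : Digraph (Fin n))
    (i j : Fin n) : 0 ≤ Dalpha α G i j := by
  have htr : 0 ≤ transm G i := Finset.sum_nonneg fun j _ => Nat.cast_nonneg _
  have hdiag : 0 ≤ Matrix.diagonal (transm G) i j := by
    rcases eq_or_ne i j with rfl | hij
    · simpa using htr
    · simp [hij]
  simp only [Dalpha, Matrix.add_apply, Matrix.smul_apply, Matrix.of_apply, smul_eq_mul]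
  exact add_nonneg (mul_nonneg hα₀ hdiag) (mul_nonneg (by linarith) (Nat.cast_nonneg _))

namespace KD

def part (k m : ℕ) {n : ℕ} (i : Fin n) : Fin 3 :=
  if (i : ℕ) < k then 0 else if (i : ℕ) < k + m then 1 else 2

def partSize (n k m : ℕ) : Fin 3 → ℝ := ![k, m, n - k - m]

def quotDist (a b : Fin 3) : ℝ := if a = 2 ∧ b = 1 then 2 else 1

-- The quotient matrix of the equitable partition of `Dalpha α (KD n k m)` by `part k m`.
noncomputable def quotMatrix (n k m : ℕ) (α : ℝ) : Matrix (Fin 3) (Fin 3) ℝ :=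
  α • Matrix.diagonal (fun a => ∑ b, partSize n k m b * quotDist a b - 1) +
    (1 - α) • Matrix.of (fun a b => partSize n k m b * quotDist a b - if a = b then 1 else 0)

variable {n k m : ℕ} {α : ℝ}

theorem adj_iff {i j : Fin n} :
    (KD n k m).Adj i j ↔ i ≠ j ∧ ¬ (part k m i = 2 ∧ part k m j = 1) := by
  simp only [KD, part]
  split_ifs <;> simp <;> omega

theorem ddist_eq (hk : 0 < k) (i j : Fin n) :
    (ddist (KD n k m) i j : ℝ) = quotDist (part k m i) (part k m j) - if i = j then 1 else 0 := by
  rcases eq_or_ne i j with rfl | hij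
  · rw [ddist_self, quotDist, if_neg fun h => absurd (h.1.symm.trans h.2) (by decide)]
    simp
  by_cases hij' : part k m i = 2 ∧ part k m j = 1
  · -- The path `i → 0 → j` through the first block.
    let z : Fin n := ⟨0, by omega⟩
    have hz : part k m z = 0 := by simp [part, z, hk]
    have hiz : (KD n k m).Adj i z :=
      adj_iff.mpr ⟨fun h => by simp [h, hz] at hij', fun h => by simp [hz] at h⟩
    have hzj : (KD n k m).Adj z j :=
      adj_iff.mpr ⟨fun h => by simp [← h, hz] at hij', fun h => by simp [hz] at h⟩
    rw [ddist_of_not_adj hij (fun h => (adj_iff.mp h).2 hij') hiz hzj]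
    simp [quotDist, hij', hij]
  · rw [ddist_of_adj hij (adj_iff.mpr ⟨hij, hij'⟩)]
    simp [quotDist, hij', hij]

theorem sum_comp_part (hkm : k + m ≤ n) (f : Fin 3 → ℝ) :
    ∑ j : Fin n, f (part k m j) = ∑ b, partSize n k m b * f b := by
  simp only [part]
  rw [Fin.sum_univ_eq_sum_range (fun l => f (if l < k then 0 else if l < k + m then 1 else 2)),
    Finset.range_eq_Ico, ← Finset.sum_Ico_consecutive _ (Nat.zero_le _) hkm,
    ← Finset.sum_Ico_consecutive _ (Nat.zero_le k) (Nat.le_add_right k m)]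
  have h₀ : ∀ l ∈ Finset.Ico 0 k, f (if l < k then 0 else if l < k + m then 1 else 2) = f 0 :=
    fun l hl => by rw [if_pos (Finset.mem_Ico.mp hl).2]
  have h₁ : ∀ l ∈ Finset.Ico k (k + m),
      f (if l < k then 0 else if l < k + m then 1 else 2) = f 1 :=
    fun l hl => by rw [Finset.mem_Ico] at hl; rw [if_neg (by omega), if_pos hl.2]
  have h₂ : ∀ l ∈ Finset.Ico (k + m) n,
      f (if l < k then 0 else if l < k + m then 1 else 2) = f 2 :=
    fun l hl => by rw [Finset.mem_Ico] at hl; rw [if_neg (by omega), if_neg (by omega)]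
  rw [Finset.sum_congr rfl h₀, Finset.sum_congr rfl h₁, Finset.sum_congr rfl h₂]
  simp only [Finset.sum_const, Nat.card_Ico, nsmul_eq_mul, Fin.sum_univ_three, partSize]
  push_cast [Nat.cast_sub hkm, Nat.sub_zero, Nat.add_sub_cancel_left]
  ring

theorem sum_ddist_mul (hk : 0 < k) (hkm : k + m ≤ n) (w : Fin 3 → ℝ) (i : Fin n) :
    ∑ j, (ddist (KD n k m) i j : ℝ) * w (part k m j) =
      ∑ b, partSize n k m b * quotDist (part k m i) b * w b - w (part k m i) := by
  simp only [ddist_eq hk, sub_mul, ite_mul, one_mul, zero_mul, Finset.sum_sub_distrib,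
    Finset.sum_ite_eq, Finset.mem_univ, if_true]
  rw [sum_comp_part hkm (fun b => quotDist (part k m i) b * w b)]
  simp only [mul_assoc]

theorem transm_eq (hk : 0 < k) (hkm : k + m ≤ n) (i : Fin n) :
    transm (KD n k m) i = ∑ b, partSize n k m b * quotDist (part k m i) b - 1 := by
  simpa [transm] using sum_ddist_mul hk hkm (fun _ => 1) i

theorem quotMatrix_mulVec_apply (w : Fin 3 → ℝ) (a : Fin 3) :
    (quotMatrix n k m α *ᵥ w) a = α * ((∑ b, partSize n k m b * quotDist a b - 1) * w a) +
      (1 - α) * (∑ b, partSize n k m b * quotDist a b * w b - w a) := by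
  rw [quotMatrix, Matrix.add_mulVec, Matrix.smul_mulVec, Matrix.smul_mulVec]
  simp only [Pi.add_apply, Pi.smul_apply, smul_eq_mul, Matrix.mulVec_diagonal]
  simp [Matrix.mulVec, dotProduct, sub_mul, Finset.sum_sub_distrib]

theorem Dalpha_mulVec_comp_part (hk : 0 < k) (hkm : k + m ≤ n) (w : Fin 3 → ℝ) :
    Dalpha α (KD n k m) *ᵥ (w ∘ part k m) = (quotMatrix n k m α *ᵥ w) ∘ part k m := by
  ext i
  simp only [Dalpha_mulVec_apply, Function.comp_apply, transm_eq hk hkm, sum_ddist_mul hk hkm,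
    quotMatrix_mulVec_apply]

theorem quotMatrix_mulVec_lt (hkn : k + 1 < n) (hα₀ : 0 ≤ α) (hα₁ : α < 1) (a : Fin 3) :
    (quotMatrix n k 1 α *ᵥ ![1, 1, 1 + 1 / n]) a < n * ![1, 1, 1 + 1 / (n : ℝ)] a := by
  have hkn' : (k : ℝ) + 1 < n := by exact_mod_cast hkn
  have hn : (0 : ℝ) < n := by linarith [(k.cast_nonneg : (0 : ℝ) ≤ k)]
  rw [quotMatrix_mulVec_apply]
  fin_cases a <;> simp [partSize, quotDist, Fin.sum_univ_three] <;> field_simp <;> nlinarith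

theorem mualpha_one_lt (hk : 0 < k) (hkn : k + 1 < n) (hα₀ : 0 ≤ α) (hα₁ : α < 1) :
    mualpha α (KD n k 1) < n := by
  have : NeZero n := ⟨by omega⟩
  set w : Fin 3 → ℝ := ![1, 1, 1 + 1 / n]
  have hw : ∀ b, 0 < w b := by intro b; fin_cases b <;> simp [w]; positivity
  refine specRad_lt_of_mulVec_lt (Dalpha_nonneg hα₀ hα₁.le _) (x := w ∘ part k 1)
    (fun i => hw _) fun i => ?_
  rw [Dalpha_mulVec_comp_part hk (by omega)]
  exact quotMatrix_mulVec_lt hkn hα₀ hα₁ _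

def charQuadratic (n k m : ℕ) (α x : ℝ) : ℝ :=
  x ^ 2 - (α * n + α * m + n - 2) * x + (1 - n - m * n - α * k * m + 2 * α * n * m - α * n
    + α * n ^ 2 - α * m - α * m ^ 2 + k * m + m ^ 2)

theorem det_quotMatrix (x : ℝ) :
    (x • 1 - quotMatrix n k m α).det = (x - (α * n - 1)) * charQuadratic n k m α x := by
  rw [Matrix.det_fin_three]
  simp [quotMatrix, partSize, quotDist, Fin.sum_univ_three, charQuadratic]
  ring

theorem part_surjective (hk : 0 < k) (hm : 0 < m) (hkmn : k + m < n) :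
    Function.Surjective (part k m : Fin n → Fin 3) := by
  intro b
  fin_cases b
  · exact ⟨⟨0, by omega⟩, by simp [part, hk]⟩
  · exact ⟨⟨k, by omega⟩, by simp [part, hm]⟩
  · exact ⟨⟨k + m, by omega⟩, by simp [part]⟩

theorem abs_le_mualpha_of_charQuadratic_eq_zero (hk : 0 < k) (hm : 0 < m) (hkmn : k + m < n)
    {r : ℝ} (hr : charQuadratic n k m α r = 0) : |r| ≤ mualpha α (KD n k m) := by
  have hdet : (r • 1 - quotMatrix n k m α).det = 0 := by rw [det_quotMatrix, hr, mul_zero]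
  obtain ⟨w, hw, hQw⟩ := Matrix.exists_mulVec_eq_zero_iff.mpr hdet
  rw [Matrix.sub_mulVec, Matrix.smul_mulVec, Matrix.one_mulVec, sub_eq_zero] at hQw
  refine abs_le_specRad_of_mulVec_eq (v := w ∘ part k m) ?_ ?_
  · exact fun h => hw ((part_surjective hk hm hkmn).injective_comp_right h)
  · rw [Dalpha_mulVec_comp_part hk hkmn.le, ← hQw]
    rfl

theorem charQuadratic_n_neg (hn : 2 * k + 2 ≤ n) (hm : 2 ≤ m) (hmn : k + m < n)
    (h0 : 4 / 5 < α) (h1 : α < 1) : charQuadratic n k m α n < 0 := by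
  have hn' : 2 * (k : ℝ) + 2 ≤ n := by exact_mod_cast hn
  have hm' : (2 : ℝ) ≤ m := by exact_mod_cast hm
  have hmn' : (k : ℝ) + m + 1 ≤ n := by exact_mod_cast hmn
  rw [charQuadratic]
  nlinarith [mul_nonneg (mul_nonneg (by linarith : (0:ℝ) ≤ 1-α) (by linarith : (0:ℝ) ≤ m-2))
      (by linarith : (0:ℝ) ≤ n-k-1-m),
    mul_nonneg (by linarith : (0:ℝ) ≤ 1-α) (by linarith : (0:ℝ) ≤ n-2*k-2),
    mul_nonneg (by linarith : (0:ℝ) ≤ 2*α-1) (by linarith : (0:ℝ) ≤ m-2)]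

end KD

theorem stmt16 {n k : ℕ} (hk : 1 ≤ k) (hn : 2 * k + 2 ≤ n)
    (α : ℝ) (h0 : 4 / 5 < α) (h1 : α < 1) :
    mualpha α (KD n k 1) < n ∧
    ∀ m : ℕ, 2 ≤ m → m ≤ n - k - 1 →
      (n : ℝ) < mualpha α (KD n k m) ∧ mualpha α (KD n k 1) < mualpha α (KD n k m) := by
  have hlt : mualpha α (KD n k 1) < n := KD.mualpha_one_lt hk (by omega) (by linarith) h1
  refine ⟨hlt, fun m hm hmn => ?_⟩
  have hkmn : k + m < n := by omega
  obtain ⟨r, hnr, hr⟩ :=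
    exists_gt_quadratic_eq_zero (KD.charQuadratic_n_neg hn hm hkmn h0 h1)
  have hgt : (n : ℝ) < mualpha α (KD n k m) :=
    hnr.trans_le <| (le_abs_self r).trans <|
      KD.abs_le_mualpha_of_charQuadratic_eq_zero hk (by omega) hkmn hr
  exact ⟨hgt, hlt.trans hgt⟩
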